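/- arXiv:1010.5691 — 2 statements merged into one kernel-verified Lean document; each statement's English description precedes it below -/
import Mathlib

section
/- Every local maximum of the function Mag(θ) = |∑_{i=1}^N a_i e^{jθ_i}| (with all a_i > 0) is a global maximum; that is, if θ* is a local maximizer of Mag then Mag(θ*) = ∑ a_i. -/
noncomputable def Mag {N : ℕ} (a θ : Fin N → ℝ) : ℝ :=
  ‖∑ i, (a i : ℂ) * Complex.exp ((θ i : ℂ) * Complex.I)‖

/-!
Write `S = ∑ xⱼ` with phasors `xⱼ = aⱼ e^{iθⱼ}`. Rotating the single phasor `xᵢ` by the angle `t`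
changes `‖S‖²` by `2 Re (conj (S - xᵢ) xᵢ (e^{it} - 1))`; for this to be maximal at `t = 0`,
`conj (S - xᵢ) xᵢ` must be a nonnegative real, so `conj S xᵢ = conj (S - xᵢ) xᵢ + ‖xᵢ‖²` is positive.
Every phasor then points in the direction of `S`, and the triangle inequality is an equality.
-/

open Complex Filter Function
open scoped ComplexOrder ComplexConjugate

lemma Real.nonneg_of_isLocalMax_mul_cos {c : ℝ} (h : IsLocalMax (fun t => c * Real.cos t) 0) :
    0 ≤ c := by
  by_contra! hc
  obtain ⟨t, hle, ht⟩ : ∃ t, c * Real.cos t ≤ c * Real.cos 0 ∧ t ∈ Set.Ioc 0 Real.pi :=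
    ((h.filter_mono nhdsWithin_le_nhds).and (Ioc_mem_nhdsGT Real.pi_pos)).exists
  have hcos : Real.cos t < Real.cos 0 := Real.cos_lt_cos_of_nonneg_of_le_pi le_rfl ht.2 ht.1
  nlinarith

lemma Complex.re_mul_exp_ofReal_mul_I (w : ℂ) (t : ℝ) :
    (w * exp (t * I)).re = w.re * Real.cos t - w.im * Real.sin t := by
  simp [mul_re, exp_ofReal_mul_I_re, exp_ofReal_mul_I_im]

lemma Complex.nonneg_of_isLocalMax_re_mul_exp {w : ℂ}
    (h : IsLocalMax (fun t : ℝ => (w * exp (t * I)).re) 0) : 0 ≤ w := by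
  simp only [re_mul_exp_ofReal_mul_I] at h
  have hderiv : HasDerivAt (fun t => w.re * Real.cos t - w.im * Real.sin t)
      (w.re * -Real.sin 0 - w.im * Real.cos 0) 0 :=
    ((Real.hasDerivAt_cos 0).const_mul _).sub ((Real.hasDerivAt_sin 0).const_mul _)
  have him : w.im = 0 := by simpa using h.hasDerivAt_eq_zero hderiv
  simp only [him, zero_mul, sub_zero] at h
  exact nonneg_iff.2 ⟨Real.nonneg_of_isLocalMax_mul_cos h, him.symm⟩

lemma Complex.nonneg_conj_mul_of_isLocalMax_norm_add_mul_exp {u v : ℂ}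
    (h : IsLocalMax (fun t : ℝ => ‖v + u * exp (t * I)‖) 0) : 0 ≤ conj v * u := by
  have hsq : ∀ t : ℝ, ‖v + u * exp (t * I)‖ ^ 2
      = ‖v‖ ^ 2 + ‖u‖ ^ 2 + 2 * (conj v * u * exp (t * I)).re := by
    intro t
    rw [← normSq_eq_norm_sq, ← normSq_eq_norm_sq, ← normSq_eq_norm_sq, normSq_add, normSq_mul,
      normSq_eq_norm_sq (exp _), norm_exp_ofReal_mul_I, ← conj_re, map_mul, conj_conj]
    ring_nf
  apply nonneg_of_isLocalMax_re_mul_exp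
  filter_upwards [h] with t ht
  have h0 := hsq 0
  simp only [ofReal_zero, zero_mul, exp_zero, mul_one] at h0 ht ⊢
  nlinarith [pow_le_pow_left₀ (norm_nonneg _) ht 2, hsq t]

lemma Complex.pos_conj_mul_of_isLocalMax_norm_sub_add_mul_exp {S u : ℂ} (hu : u ≠ 0)
    (h : IsLocalMax (fun t : ℝ => ‖S - u + u * exp (t * I)‖) 0) : 0 < conj S * u := by
  calc 0 < ((‖u‖ ^ 2 : ℝ) : ℂ) := by exact_mod_cast pow_pos (norm_pos_iff.2 hu) 2
    _ ≤ conj (S - u) * u + (‖u‖ ^ 2 : ℝ) :=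
      le_add_of_nonneg_left (nonneg_conj_mul_of_isLocalMax_norm_add_mul_exp h)
    _ = conj S * u := by rw [map_sub, sub_mul, ofReal_pow, ← conj_mul']; ring

lemma Complex.norm_sum_eq_sum_norm_of_pos_conj_mul {ι : Type*} (s : Finset ι) (x : ι → ℂ)
    (h : ∀ i ∈ s, 0 < conj (∑ j ∈ s, x j) * x i) : ‖∑ i ∈ s, x i‖ = ∑ i ∈ s, ‖x i‖ := by
  set S := ∑ j ∈ s, x j
  by_cases hS : S = 0
  · rw [hS, norm_zero, eq_comm]
    exact Finset.sum_eq_zero fun i hi => absurd (h i hi) (by simp [hS])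
  have hterm : ∀ i ∈ s, conj S * x i = ((‖S‖ * ‖x i‖ : ℝ) : ℂ) := fun i hi => by
    rw [eq_coe_norm_of_nonneg (h i hi).le, norm_mul, norm_conj]
  have hsq : ((‖S‖ ^ 2 : ℝ) : ℂ) = ((‖S‖ * ∑ i ∈ s, ‖x i‖ : ℝ) : ℂ) := by
    rw [Finset.mul_sum]; push_cast
    rw [← conj_mul', Finset.mul_sum]
    exact_mod_cast Finset.sum_congr rfl hterm
  refine mul_left_cancel₀ (norm_ne_zero_iff.2 hS) ?_
  rw [← sq]
  exact ofReal_injective hsq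

lemma mag_update_add {N : ℕ} (a θ : Fin N → ℝ) (i : Fin N) (t : ℝ) :
    Mag a (update θ i (θ i + t)) = ‖(∑ j, (a j : ℂ) * exp (θ j * I) - a i * exp (θ i * I))
      + a i * exp (θ i * I) * exp (t * I)‖ := by
  unfold Mag
  congr 1
  rw [Finset.sum_congr rfl fun j _ =>
      apply_update (fun j (y : ℝ) => (a j : ℂ) * exp (y * I)) θ i _ j,
    Finset.sum_update_of_mem (Finset.mem_univ i), ← Finset.sum_erase_eq_sub (Finset.mem_univ i),
    Finset.sdiff_singleton_eq_erase, ofReal_add, add_mul, exp_add]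
  ring

theorem mag_local_max_is_global_general {N : ℕ} (a : Fin N → ℝ)
    (ha : ∀ i, 0 < a i) (θstar : Fin N → ℝ)
    (hloc : ∃ ε > 0, ∀ θ : Fin N → ℝ, ‖θ - θstar‖ < ε → Mag a θ ≤ Mag a θstar) :
    Mag a θstar = ∑ i, a i := by
  obtain ⟨ε, hε, hle⟩ := hloc
  have hmax : IsLocalMax (Mag a) θstar :=
    Metric.eventually_nhds_iff.2 ⟨ε, hε, fun θ hθ => hle θ (dist_eq_norm θ θstar ▸ hθ)⟩
  set x : Fin N → ℂ := fun i => a i * exp (θstar i * I)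
  have hnorm : ∀ i, ‖x i‖ = a i := fun i => by simp [x, (ha i).le]
  have hpos : ∀ i ∈ Finset.univ, 0 < conj (∑ j, x j) * x i := fun i _ => by
    refine pos_conj_mul_of_isLocalMax_norm_sub_add_mul_exp (norm_pos_iff.1 (hnorm i ▸ ha i)) ?_
    have hmax' : IsLocalMax (Mag a) (update θstar i (θstar i + 0)) := by simpa using hmax
    simpa only [comp_def, mag_update_add] using
      hmax'.comp_continuous (g := fun t => update θstar i (θstar i + t)) (by fun_prop)
  calc Mag a θstar = ‖∑ i, x i‖ := rfl
    _ = ∑ i, ‖x i‖ := norm_sum_eq_sum_norm_of_pos_conj_mul _ x hpos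
    _ = ∑ i, a i := Finset.sum_congr rfl fun i _ => hnorm i

theorem mag_local_max_is_global {N : ℕ} (hN : 1 ≤ N) (a : Fin N → ℝ)
    (ha : ∀ i, 0 < a i) (θstar : Fin N → ℝ)
    (hloc : ∃ ε > 0, ∀ θ : Fin N → ℝ, ‖θ - θstar‖ < ε → Mag a θ ≤ Mag a θstar) :
    Mag a θstar = ∑ i, a i :=
  mag_local_max_is_global_general a ha θstar hloc
end

section
/- Suppose f : Θ → ℝ is bounded above by M, and a random process θ[n] satisfies (i) f(θ[n]) is nondecreasing, and (ii) there exist γ > 0, η ∈ (0,1] such that whenever f(θ[n]) ≤ M − ε, Pr[f(θ[n+1]) − f(θ[n]) ≥ γ | θ[n]] ≥ η. Then Pr[f(θ[n]) > M − ε] → 1 as n → ∞. -/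
/-!
Along every sample path, `f (θ n)` is nondecreasing and bounded, hence convergent, so its
increments tend to `0`: each path makes only finitely many gains of size `γ`. By continuity from
above, the probability of a `γ`-gain at step `n` therefore tends to `0`, and hypothesis (ii)
bounds the probability of not yet being in `R_ε` by `η⁻¹` times that probability.
-/

open MeasureTheory Filter Topology

theorem Monotone.tendsto_succ_sub_zero {g : ℕ → ℝ} (hg : Monotone g)
    (hbdd : BddAbove (Set.range g)) :
    Tendsto (fun n => g (n + 1) - g n) atTop (𝓝 0) := by
  have hlim := tendsto_atTop_ciSup hg hbdd
  simpa using (hlim.comp (tendsto_add_atTop_nat 1)).sub hlim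

theorem MeasureTheory.tendsto_measure_zero_of_ae_eventually_notMem {α : Type*}
    [MeasurableSpace α] {μ : Measure α} [IsFiniteMeasure μ] {s : ℕ → Set α}
    (hs : ∀ n, MeasurableSet (s n)) (h : ∀ᵐ x ∂μ, ∀ᶠ n in atTop, x ∉ s n) :
    Tendsto (fun n => μ (s n)) atTop (𝓝 0) := by
  set tail : ℕ → Set α := fun n => ⋃ k ≥ n, s k
  have htail_anti : Antitone tail := fun m n hmn =>
    Set.biUnion_subset_biUnion_left fun k (hk : n ≤ k) => hmn.trans hk
  have htail_null : μ (⋂ n, tail n) = 0 := by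
    refine measure_mono_null (fun x hx => ?_) (ae_iff.1 h)
    simp only [Set.mem_iInter, Set.mem_iUnion, tail] at hx
    simpa [Filter.not_eventually, frequently_atTop] using hx
  have htail : Tendsto (fun n => μ (tail n)) atTop (𝓝 0) := by
    rw [← htail_null]
    exact tendsto_measure_iInter_atTop
      (fun n => (MeasurableSet.biUnion (Set.to_countable _) fun k _ => hs k).nullMeasurableSet)
      htail_anti ⟨0, measure_ne_top μ _⟩
  exact tendsto_of_tendsto_of_tendsto_of_le_of_le tendsto_const_nhds htail
    (fun _ => bot_le) fun n => measure_mono (Set.subset_biUnion_of_mem (le_refl n))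

theorem ENNReal.tendsto_zero_of_const_mul_le {ι : Type*} {l : Filter ι} {a b : ι → ENNReal}
    {c : ENNReal} (hc₀ : c ≠ 0) (hc : c ≠ ⊤) (hab : ∀ i, c * a i ≤ b i)
    (hb : Tendsto b l (𝓝 0)) : Tendsto a l (𝓝 0) := by
  have hca : Tendsto (fun i => c * a i) l (𝓝 0) :=
    tendsto_of_tendsto_of_tendsto_of_le_of_le tendsto_const_nhds hb (fun _ => bot_le) hab
  simpa [← mul_assoc, ENNReal.inv_mul_cancel hc₀ hc] using
    ENNReal.Tendsto.const_mul hca (Or.inr (ENNReal.inv_ne_top.2 hc₀))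

theorem random_search_converges_in_probability_general
    {Ω : Type*} [MeasurableSpace Ω] (ℙ : Measure Ω) [IsProbabilityMeasure ℙ]
    {Θ : Type*} (f : Θ → ℝ) (θ : ℕ → Ω → Θ)
    (M ε γ η : ℝ) (hγ : 0 < γ) (hη : 0 < η)
    (hmeas : ∀ n, Measurable (fun ω => f (θ n ω)))
    (hbdd : ∀ n ω, f (θ n ω) ≤ M)
    (hmono : ∀ ω, Monotone (fun n => f (θ n ω)))
    (himp : ∀ n, ENNReal.ofReal η * ℙ {ω | f (θ n ω) ≤ M - ε} ≤
      ℙ {ω | f (θ n ω) ≤ M - ε ∧ γ ≤ f (θ (n + 1) ω) - f (θ n ω)}) :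
    Tendsto (fun n => ℙ {ω | M - ε < f (θ n ω)}) atTop (nhds 1) := by
  have hbad_meas : ∀ n, MeasurableSet {ω | f (θ n ω) ≤ M - ε} := fun n =>
    measurableSet_le (hmeas n) measurable_const
  have hgain : Tendsto (fun n => ℙ {ω | f (θ n ω) ≤ M - ε ∧ γ ≤ f (θ (n + 1) ω) - f (θ n ω)})
      atTop (𝓝 0) := by
    refine tendsto_measure_zero_of_ae_eventually_notMem (fun n => (hbad_meas n).inter
      (measurableSet_le measurable_const ((hmeas (n + 1)).sub (hmeas n)))) (ae_of_all _ ?_)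
    intro ω
    have hinc := (hmono ω).tendsto_succ_sub_zero ⟨M, Set.forall_mem_range.2 fun n => hbdd n ω⟩
    filter_upwards [hinc.eventually_lt_const hγ] with n hn hstep
    exact hn.not_ge hstep.2
  have hbad : Tendsto (fun n => ℙ {ω | f (θ n ω) ≤ M - ε}) atTop (𝓝 0) :=
    ENNReal.tendsto_zero_of_const_mul_le (ENNReal.ofReal_pos.2 hη).ne' ENNReal.ofReal_ne_top
      himp hgain
  have hgood : ∀ n, ℙ {ω | M - ε < f (θ n ω)} = 1 - ℙ {ω | f (θ n ω) ≤ M - ε} := fun n => by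
    rw [← prob_compl_eq_one_sub (hbad_meas n)]
    simp only [Set.compl_ofPred, not_le]
  simpa [hgood] using ENNReal.Tendsto.sub tendsto_const_nhds hbad (Or.inl ENNReal.one_ne_top)

theorem random_search_converges_in_probability
    {Ω : Type*} [MeasurableSpace Ω] (ℙ : Measure Ω) [IsProbabilityMeasure ℙ]
    {Θ : Type*} [MeasurableSpace Θ] (f : Θ → ℝ) (θ : ℕ → Ω → Θ)
    (M ε γ η : ℝ) (hε : 0 < ε) (hγ : 0 < γ) (hη : 0 < η) (hη1 : η ≤ 1)
    (hmeas : ∀ n, Measurable (fun ω => f (θ n ω)))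
    (hbdd : ∀ n ω, f (θ n ω) ≤ M)
    (hmono : ∀ ω, Monotone (fun n => f (θ n ω)))
    (himp : ∀ n, ENNReal.ofReal η * ℙ {ω | f (θ n ω) ≤ M - ε} ≤
      ℙ {ω | f (θ n ω) ≤ M - ε ∧ γ ≤ f (θ (n + 1) ω) - f (θ n ω)}) :
    Tendsto (fun n => ℙ {ω | M - ε < f (θ n ω)}) atTop (nhds 1) :=
  random_search_converges_in_probability_general ℙ f θ M ε γ η hγ hη hmeas hbdd hmono himp
end
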